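/- Suppose p ∈ (0,1]. If θ ∈ J_γ \ J_{γ,T}, then every ξ ∈ ℝ with p(ξ, θ) = 0 satisfies ∂_ξ p(ξ, θ) ≠ 0. If θ ∈ J_{γ,T}, then every ξ ∈ ℝ with p(ξ, θ) = 0 satisfies ∂_ξ p(ξ, θ) = 0. -/

import Mathlib

noncomputable section

/-- The arc `J_γ`. -/
def Jgamma (p γ : ℝ) : Set ℝ :=
  Set.Icc (Real.arccos p + γ / 2) (Real.pi - Real.arccos p + γ / 2) ∪
    Set.Icc (Real.pi + Real.arccos p + γ / 2) (2 * Real.pi - Real.arccos p + γ / 2)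

/-- The threshold set `J_{γ,T}`. -/
def JgammaT (p γ : ℝ) : Set ℝ :=
  {Real.arccos p + γ / 2, Real.pi - Real.arccos p + γ / 2,
    Real.pi + Real.arccos p + γ / 2, 2 * Real.pi - Real.arccos p + γ / 2}

/-- `p(z,θ) = det(Û₀(ξ) - e^{iθ})`, as a function of a complex variable `z`. -/
def Pdet (p α γ : ℝ) (z : ℂ) (θ : ℝ) : ℂ :=
  Complex.exp (2 * θ * Complex.I) -
    2 * Complex.exp (θ * Complex.I) * (p : ℂ) * Complex.exp ((γ / 2 : ℝ) * Complex.I) *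
      Complex.cos (z + α - γ / 2) +
    Complex.exp (γ * Complex.I)

lemma pdet_factor (p α γ θ ξ : ℝ) :
    Pdet p α γ ξ θ = 2 * Complex.exp (↑θ * Complex.I) * Complex.exp ((↑γ/2 : ℂ) * Complex.I) *
      (↑(Real.cos (θ - γ/2)) - ↑p * Complex.cos (↑ξ + ↑α - ↑γ/2)) := by
  unfold Pdet
  rw [Complex.ofReal_cos]
  push_cast
  have hE := Complex.exp_ne_zero ((↑θ:ℂ) * Complex.I)
  have hG := Complex.exp_ne_zero ((↑γ/2:ℂ) * Complex.I)
  have hcos : Complex.cos ((↑θ:ℂ) - ↑γ/2) =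
      (Complex.exp (((↑θ:ℂ) - ↑γ/2) * Complex.I) +
        Complex.exp (-(((↑θ:ℂ) - ↑γ/2) * Complex.I))) / 2 := by rw [Complex.cos]; ring_nf
  have e1 : Complex.exp (2 * (↑θ:ℂ) * Complex.I) =
      Complex.exp ((↑θ:ℂ) * Complex.I) * Complex.exp ((↑θ:ℂ) * Complex.I) := by
    rw [← Complex.exp_add]; ring_nf
  have e2 : Complex.exp ((↑γ:ℂ) * Complex.I) =
      Complex.exp ((↑γ/2:ℂ) * Complex.I) * Complex.exp ((↑γ/2:ℂ) * Complex.I) := by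
    rw [← Complex.exp_add]; ring_nf
  have e3 : Complex.exp (((↑θ:ℂ) - ↑γ/2) * Complex.I) =
      Complex.exp ((↑θ:ℂ) * Complex.I) * (Complex.exp ((↑γ/2:ℂ) * Complex.I))⁻¹ := by
    rw [← Complex.exp_neg, ← Complex.exp_add]; ring_nf
  have e4 : Complex.exp (-(((↑θ:ℂ) - ↑γ/2) * Complex.I)) =
      (Complex.exp ((↑θ:ℂ) * Complex.I))⁻¹ * Complex.exp ((↑γ/2:ℂ) * Complex.I) := by
    rw [← Complex.exp_neg, ← Complex.exp_add]; ring_nf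
  rw [hcos, e1, e2, e3, e4]
  field_simp
  ring

lemma pdet_deriv (p α γ θ ξ : ℝ) :
    deriv (fun ξ' : ℝ => Pdet p α γ ξ' θ) ξ =
      2 * Complex.exp (↑θ * Complex.I) * ↑p * Complex.exp ((↑(γ/2):ℂ) * Complex.I) *
        Complex.sin (↑ξ + ↑α - ↑γ/2) := by
  have h : HasDerivAt (fun z : ℂ => Pdet p α γ z θ)
      (2 * Complex.exp (↑θ * Complex.I) * ↑p * Complex.exp ((↑(γ/2):ℂ) * Complex.I) *
        Complex.sin ((↑ξ:ℂ) + ↑α - ↑γ/2)) (↑ξ:ℂ) := by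
    unfold Pdet
    have hc : HasDerivAt (fun z : ℂ => Complex.cos (z + ↑α - ↑γ/2))
        (-Complex.sin ((↑ξ:ℂ) + ↑α - ↑γ/2)) (↑ξ:ℂ) := by
      have := (Complex.hasDerivAt_cos ((↑ξ:ℂ) + ↑α - ↑γ/2)).comp (↑ξ:ℂ)
        (((hasDerivAt_id (↑ξ:ℂ)).add_const (↑α:ℂ)).sub_const ((↑γ:ℂ)/2))
      rw [mul_one] at this; exact this
    have := ((hc.const_mul
        (2 * Complex.exp (↑θ * Complex.I) * ↑p * Complex.exp ((↑(γ/2):ℂ) * Complex.I))).const_sub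
        (Complex.exp (2 * ↑θ * Complex.I))).add_const (Complex.exp ((↑γ:ℂ) * Complex.I))
    simpa using this
  have := h.comp_ofReal
  exact this.deriv

lemma pdet_cos_cast (α γ : ℝ) (ξ : ℝ) :
    Complex.cos ((↑ξ:ℂ) + ↑α - ↑γ/2) = ↑(Real.cos (ξ + α - γ/2)) := by
  norm_cast

lemma pdet_zero_cos (p α γ θ ξ : ℝ) (h : Pdet p α γ ξ θ = 0) :
    Real.cos (θ - γ/2) = p * Real.cos (ξ + α - γ/2) := by
  rw [pdet_factor] at h
  have hne : (2:ℂ) * Complex.exp (↑θ * Complex.I) * Complex.exp ((↑γ/2 : ℂ) * Complex.I) ≠ 0 :=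
    mul_ne_zero (mul_ne_zero two_ne_zero (Complex.exp_ne_zero _)) (Complex.exp_ne_zero _)
  rcases mul_eq_zero.1 h with h' | h'
  · exact absurd h' hne
  · have h2 := sub_eq_zero.1 h'
    rw [pdet_cos_cast] at h2
    exact_mod_cast h2

lemma pdet_deriv_zero_iff (p α γ θ ξ : ℝ) (hp : p ≠ 0) :
    deriv (fun ξ' : ℝ => Pdet p α γ ξ' θ) ξ = 0 ↔ Real.sin (ξ + α - γ/2) = 0 := by
  rw [pdet_deriv]
  have hsin : Complex.sin ((↑ξ:ℂ) + ↑α - ↑γ/2) = ↑(Real.sin (ξ + α - γ/2)) := by norm_cast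
  rw [hsin, mul_eq_zero]
  have hC : ¬ ((2:ℂ) * Complex.exp (↑θ * Complex.I) * ↑p *
      Complex.exp ((↑(γ/2):ℂ) * Complex.I) = 0) := by
    simp [Complex.exp_ne_zero, hp]
  simp only [hC, false_or, Complex.ofReal_eq_zero]

/-- for `θ` in the interior arcs `J_γ \ J_{γ,T}` all real zeros of
`ξ ↦ p(ξ,θ)` are simple, while for threshold values `θ ∈ J_{γ,T}` all real zeros
are critical points. -/
theorem zeros_regular_or_singular
    (p α γ : ℝ) (hp : p ∈ Set.Ioc (0 : ℝ) 1)
    (hα : α ∈ Set.Ico 0 (2 * Real.pi)) (hγ : γ ∈ Set.Ico 0 (2 * Real.pi))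
    (θ : ℝ) :
    (θ ∈ Jgamma p γ \ JgammaT p γ →
      ∀ ξ : ℝ, Pdet p α γ ξ θ = 0 → deriv (fun ξ' : ℝ => Pdet p α γ ξ' θ) ξ ≠ 0) ∧
    (θ ∈ JgammaT p γ →
      ∀ ξ : ℝ, Pdet p α γ ξ θ = 0 → deriv (fun ξ' : ℝ => Pdet p α γ ξ' θ) ξ = 0) := by
  obtain ⟨hp0, hp1⟩ := hp
  have hA0 : 0 ≤ Real.arccos p := Real.arccos_nonneg p
  have hAπ : Real.arccos p ≤ Real.pi := Real.arccos_le_pi p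
  have hcA : Real.cos (Real.arccos p) = p := Real.cos_arccos (by linarith) hp1
  constructor
  · rintro ⟨hJ, hT⟩ ξ hz
    simp only [JgammaT, Set.mem_insert_iff, Set.mem_singleton_iff, not_or] at hT
    obtain ⟨hT1, hT2, hT3, hT4⟩ := hT
    have hbound : -p < Real.cos (θ - γ/2) ∧ Real.cos (θ - γ/2) < p := by
      rcases hJ with ⟨h1, h2⟩ | ⟨h1, h2⟩
      · have hl : Real.arccos p < θ - γ/2 :=
          lt_of_le_of_ne (by linarith) (fun e => hT1 (by linarith))
        have hr : θ - γ/2 < Real.pi - Real.arccos p :=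
          lt_of_le_of_ne (by linarith) (fun e => hT2 (by linarith))
        constructor
        · have := Real.cos_lt_cos_of_nonneg_of_le_pi (by linarith : (0:ℝ) ≤ θ - γ/2)
            (by linarith : Real.pi - Real.arccos p ≤ Real.pi) hr
          rw [Real.cos_pi_sub, hcA] at this
          linarith
        · have := Real.cos_lt_cos_of_nonneg_of_le_pi hA0
            (by linarith : θ - γ/2 ≤ Real.pi) hl
          rw [hcA] at this
          linarith
      · have hl : Real.arccos p < 2 * Real.pi - (θ - γ/2) := by
          have : θ - γ/2 < 2 * Real.pi - Real.arccos p :=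
            lt_of_le_of_ne (by linarith) (fun e => hT4 (by linarith))
          linarith
        have hr : 2 * Real.pi - (θ - γ/2) < Real.pi - Real.arccos p := by
          have : Real.pi + Real.arccos p < θ - γ/2 :=
            lt_of_le_of_ne (by linarith) (fun e => hT3 (by linarith))
          linarith
        have hco : Real.cos (θ - γ/2) = Real.cos (2 * Real.pi - (θ - γ/2)) := by
          rw [Real.cos_two_pi_sub]
        rw [hco]
        constructor
        · have := Real.cos_lt_cos_of_nonneg_of_le_pi
            (by linarith : (0:ℝ) ≤ 2 * Real.pi - (θ - γ/2))
            (by linarith : Real.pi - Real.arccos p ≤ Real.pi) hr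
          rw [Real.cos_pi_sub, hcA] at this
          linarith
        · have := Real.cos_lt_cos_of_nonneg_of_le_pi hA0
            (by linarith : 2 * Real.pi - (θ - γ/2) ≤ Real.pi) hl
          rw [hcA] at this
          linarith
    obtain ⟨hb1, hb2⟩ := hbound
    have hcc := pdet_zero_cos p α γ θ ξ hz
    intro h0
    have hs := (pdet_deriv_zero_iff p α γ θ ξ hp0.ne').1 h0
    have hsc := Real.sin_sq_add_cos_sq (ξ + α - γ/2)
    have hcx2 : Real.cos (ξ + α - γ/2) ^ 2 = 1 := by nlinarith
    have hc2 : Real.cos (θ - γ/2) ^ 2 = p ^ 2 := by rw [hcc]; nlinarith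
    nlinarith [mul_pos (sub_pos.2 hb2) (by linarith : (0:ℝ) < p + Real.cos (θ - γ/2))]
  · intro hT ξ hz
    have hcc := pdet_zero_cos p α γ θ ξ hz
    rw [pdet_deriv_zero_iff p α γ θ ξ hp0.ne']
    have hcx : Real.cos (ξ + α - γ/2) = 1 ∨ Real.cos (ξ + α - γ/2) = -1 := by
      simp only [JgammaT, Set.mem_insert_iff, Set.mem_singleton_iff] at hT
      rcases hT with h | h | h | h
      · left
        have hφ : θ - γ/2 = Real.arccos p := by linarith
        rw [hφ, hcA] at hcc
        have := mul_left_cancel₀ hp0.ne'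
          (by linarith : p * 1 = p * Real.cos (ξ + α - γ/2))
        linarith
      · right
        have hφ : θ - γ/2 = Real.pi - Real.arccos p := by linarith
        rw [hφ, Real.cos_pi_sub, hcA] at hcc
        have := mul_left_cancel₀ hp0.ne'
          (by linarith : p * (-1) = p * Real.cos (ξ + α - γ/2))
        linarith
      · right
        have hφ : θ - γ/2 = Real.pi + Real.arccos p := by linarith
        have hcπ : Real.cos (Real.pi + Real.arccos p) = -p := by
          rw [Real.cos_add]; simp [hcA]
        rw [hφ, hcπ] at hcc
        have := mul_left_cancel₀ hp0.ne'
          (by linarith : p * (-1) = p * Real.cos (ξ + α - γ/2))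
        linarith
      · left
        have hφ : θ - γ/2 = 2 * Real.pi - Real.arccos p := by linarith
        rw [hφ, Real.cos_two_pi_sub, hcA] at hcc
        have := mul_left_cancel₀ hp0.ne'
          (by linarith : p * 1 = p * Real.cos (ξ + α - γ/2))
        linarith
    have hs2 : Real.sin (ξ + α - γ/2) ^ 2 = 0 := by
      have := Real.sin_sq_add_cos_sq (ξ + α - γ/2)
      rcases hcx with h | h <;> nlinarith
    exact (pow_eq_zero_iff (by norm_num : (2:ℕ) ≠ 0)).1 hs2
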